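/- In the setting of a family U satisfying (u₁) and (u₂), if f_n → f_0 in the C^k topology then ∫ |log |det DF_n| − log |det DF_0|| dm → 0; that is, log |det DF_f| varies continuously in L^1(m) with f ∈ U. -/

import Mathlib

/-!
Where `τ n = τ 0 ≤ N`, both `JF n` and `JF 0` are the same finite product of Jacobians along
iterates; such products converge uniformly, and `log` is `1`-Lipschitz on `[1, ∞)`, so the
integrand is uniformly small there. Everywhere else the integrand is at most
`log K · (τ n + τ 0) ≤ log K · ((2N + 1) |τ n - τ 0| + 2 τ 0 𝟙{τ 0 > N})`, whose integral is small
by the `L¹` convergence of the return times and the integrability of `τ 0`.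
-/

open MeasureTheory Filter Topology Set ENNReal

theorem Real.abs_log_sub_log_le_abs_sub {a b : ℝ} (ha : 1 ≤ a) (hb : 1 ≤ b) :
    |Real.log a - Real.log b| ≤ |a - b| := by
  wlog hba : b ≤ a generalizing a b
  · rw [abs_sub_comm, abs_sub_comm a]
    exact this hb ha (le_of_not_ge hba)
  have hb0 : 0 < b := by linarith
  have hlog : Real.log a - Real.log b ≤ (a - b) / b := by
    rw [← Real.log_div (by linarith) hb0.ne', sub_div, div_self hb0.ne']
    exact Real.log_le_sub_one_of_pos (by positivity)
  rw [abs_of_nonneg (sub_nonneg.2 (Real.log_le_log hb0 hba)), abs_of_nonneg (sub_nonneg.2 hba)]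
  exact hlog.trans (div_le_self (sub_nonneg.2 hba) hb)

theorem Real.log_prod_le_card_mul_log {ι : Type*} {s : Finset ι} {a : ι → ℝ} {K : ℝ}
    (ha : ∀ i ∈ s, 0 < a i) (haK : ∀ i ∈ s, a i ≤ K) :
    Real.log (∏ i ∈ s, a i) ≤ s.card * Real.log K := by
  rw [Real.log_prod fun i hi => (ha i hi).ne', ← nsmul_eq_mul, ← Finset.sum_const]
  exact Finset.sum_le_sum fun i hi => Real.log_le_log (ha i hi) (haK i hi)

theorem natCast_add_le_of_ne_or_lt (a b N : ℕ) (h : a ≠ b ∨ N < b) :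
    (a + b : ℝ) ≤ (2 * N + 1) * |(a : ℝ) - b| + 2 * (if N < b then (b : ℝ) else 0) := by
  have hab : (a : ℝ) ≤ |(a : ℝ) - b| + b := by linarith [le_abs_self ((a : ℝ) - b)]
  split_ifs with hNb
  · nlinarith [abs_nonneg ((a : ℝ) - b)]
  · have hone : (1 : ℝ) ≤ |(a : ℝ) - b| := by
      have h1 : (1 : ℤ) ≤ |(a : ℤ) - b| :=
        Int.one_le_abs (sub_ne_zero.2 (by exact_mod_cast h.resolve_right hNb))
      exact_mod_cast h1
    have hbN : (b : ℝ) ≤ N := by exact_mod_cast not_lt.1 hNb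
    nlinarith

theorem tendstoUniformly_prod_comp_iterate {X ι : Type*} [UniformSpace X] [CompactSpace X]
    {l : Filter ι} {f : ι → X → X} {f₀ : X → X} {J : ι → X → ℝ} {J₀ : X → ℝ}
    (hf : ∀ i, Continuous (f i)) (hf₀ : Continuous f₀) (hJ : ∀ i, Continuous (J i))
    (hJ₀ : Continuous J₀) (hfJ : TendstoUniformly f f₀ l) (hJJ : TendstoUniformly J J₀ l)
    (t : ℕ) :
    TendstoUniformly (fun i x => ∏ j ∈ Finset.range t, J i ((f i)^[j] x))
      (fun x => ∏ j ∈ Finset.range t, J₀ (f₀^[j] x)) l := by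
  -- On a compact space uniform convergence is convergence in `C(X, _)`, where composition and
  -- pointwise products are jointly continuous.
  have hiter : ∀ j, Tendsto (fun i => (⟨(f i)^[j], (hf i).iterate j⟩ : C(X, X))) l
      (𝓝 ⟨f₀^[j], hf₀.iterate j⟩) := by
    intro j
    induction j with
    | zero => exact tendsto_const_nhds
    | succ j ih =>
      have hF : Tendsto (fun i => (⟨f i, hf i⟩ : C(X, X))) l (𝓝 ⟨f₀, hf₀⟩) :=
        ContinuousMap.tendsto_iff_tendstoUniformly.2 hfJ
      exact (ContinuousMap.continuous_comp'.tendsto _).comp (hF.prodMk_nhds ih)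
  have hJt : Tendsto (fun i => (⟨J i, hJ i⟩ : C(X, ℝ))) l (𝓝 ⟨J₀, hJ₀⟩) :=
    ContinuousMap.tendsto_iff_tendstoUniformly.2 hJJ
  have hprod := tendsto_finsetProd (Finset.range t) fun j _ =>
    (ContinuousMap.continuous_comp'.tendsto _).comp ((hiter j).prodMk_nhds hJt)
  convert ContinuousMap.tendsto_iff_tendstoUniformly.1 hprod using 1 <;> ext <;> simp

theorem tendsto_setIntegral_natCast_lt {X : Type*} [MeasurableSpace X] {μ : Measure X}
    {τ : X → ℕ} (hτ : Measurable τ) {g : X → ℝ} (hg : Integrable g μ) :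
    Tendsto (fun N : ℕ => ∫ x in {x | N < τ x}, g x ∂μ) atTop (𝓝 0) := by
  have hempty : ⋂ N : ℕ, {x | N < τ x} = ∅ :=
    eq_empty_of_forall_notMem fun x hx => lt_irrefl (τ x) (mem_iInter.1 hx (τ x))
  simpa [hempty] using tendsto_setIntegral_of_antitone (s := fun N : ℕ => {x | N < τ x})
    (fun N => hτ measurableSet_Ioi)
    (fun N N' hNN' x (hx : N' < τ x) => lt_of_le_of_lt hNN' hx) ⟨0, hg.integrableOn⟩

theorem tendsto_integral_abs_of_le_mul_returnTime {X ι : Type*} [MeasurableSpace X]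
    {μ : Measure X} [IsFiniteMeasure μ] {l : Filter ι} {τ : ι → X → ℕ} {τ₀ : X → ℕ}
    (hτ₀ : Measurable τ₀) (hτ : ∀ i, Integrable (fun x => (τ i x : ℝ)) μ)
    (hτ₀int : Integrable (fun x => (τ₀ x : ℝ)) μ)
    (hτL1 : Tendsto (fun i => ∫ x, |(τ i x : ℝ) - τ₀ x| ∂μ) l (𝓝 0))
    {g : ι → X → ℝ} {L : ℝ} (hL : 0 ≤ L) (hg : ∀ i x, |g i x| ≤ L * (τ i x + τ₀ x))
    (hg_small : ∀ N : ℕ, ∀ ε > 0, ∀ᶠ i in l, ∀ x, τ i x = τ₀ x → τ₀ x ≤ N → |g i x| ≤ ε) :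
    Tendsto (fun i => ∫ x, |g i x| ∂μ) l (𝓝 0) := by
  refine tendsto_order.2 ⟨fun a ha => Eventually.of_forall fun i =>
    ha.trans_le (integral_nonneg fun _ => abs_nonneg _), fun ε hε => ?_⟩
  have hε3 : 0 < ε / 3 := by positivity
  obtain ⟨N, hN⟩ : ∃ N : ℕ, 2 * L * ∫ x in {x | N < τ₀ x}, (τ₀ x : ℝ) ∂μ < ε / 3 :=
    (((tendsto_setIntegral_natCast_lt hτ₀ hτ₀int).const_mul (2 * L)).eventually
      (gt_mem_nhds (by simpa using hε3))).exists
  obtain ⟨η, hη, hμη⟩ := exists_pos_mul_lt hε3 (μ.real univ)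
  filter_upwards [hg_small N η hη, (hτL1.const_mul (L * (2 * N + 1))).eventually
    (gt_mem_nhds (show L * (2 * N + 1) * 0 < ε / 3 by rwa [mul_zero]))] with i hgood hdist
  set d : X → ℝ := fun x => |(τ i x : ℝ) - τ₀ x|
  set T : X → ℝ := {x | N < τ₀ x}.indicator (fun x => (τ₀ x : ℝ))
  have hpt : ∀ x, |g i x| ≤ η + L * (2 * N + 1) * d x + 2 * L * T x := by
    intro x
    have hT : T x = if N < τ₀ x then (τ₀ x : ℝ) else 0 := by
      simp only [T, Set.indicator_apply, Set.mem_ofPred_eq]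
    have hT0 : 0 ≤ T x := by rw [hT]; split_ifs <;> positivity
    by_cases hx : τ i x = τ₀ x ∧ τ₀ x ≤ N
    · have hd0 : 0 ≤ L * (2 * N + 1) * d x := by positivity
      linarith [hgood x hx.1 hx.2, mul_nonneg (mul_nonneg zero_le_two hL) hT0]
    · have key := natCast_add_le_of_ne_or_lt (τ i x) (τ₀ x) N (by omega)
      rw [← hT] at key
      nlinarith [hg i x, mul_le_mul_of_nonneg_left key hL]
  have hs : MeasurableSet {x | N < τ₀ x} := hτ₀ measurableSet_Ioi
  have hd : Integrable d μ := ((hτ i).sub hτ₀int).abs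
  have hTi : Integrable T μ := hτ₀int.indicator hs
  have hdη : Integrable (fun x => η + L * (2 * N + 1) * d x) μ :=
    (integrable_const η).add (hd.const_mul _)
  have hT2 : Integrable (fun x => 2 * L * T x) μ := hTi.const_mul _
  calc ∫ x, |g i x| ∂μ ≤ ∫ x, (η + L * (2 * N + 1) * d x + 2 * L * T x) ∂μ :=
        integral_mono_of_nonneg (ae_of_all _ fun _ => abs_nonneg _) (hdη.add hT2)
          (ae_of_all _ hpt)
    _ = μ.real univ * η + L * (2 * N + 1) * ∫ x, d x ∂μ
          + 2 * L * ∫ x in {x | N < τ₀ x}, (τ₀ x : ℝ) ∂μ := by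
        rw [integral_add hdη hT2, integral_add (integrable_const η) (hd.const_mul _),
          integral_const, integral_const_mul, integral_const_mul, smul_eq_mul,
          ← integral_indicator hs]
    _ < ε := by linarith

theorem stmt_16_general {X : Type*} [MeasurableSpace X] [MetricSpace X] [CompactSpace X]
    (m : Measure X) [IsProbabilityMeasure m]
    (f : ℕ → X → X) (hfcont : ∀ n, Continuous (f n))
    (Jf : ℕ → X → ℝ) (hJfcont : ∀ n, Continuous (Jf n))
    -- `C^k` convergence `f n → f 0`: the maps and their Jacobians converge uniformly
    (hfconv : TendstoUniformly (fun n => f n) (f 0) atTop)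
    (hJfconv : TendstoUniformly (fun n => Jf n) (Jf 0) atTop)
    -- uniform bound on the Jacobians over the family (compactness of `M`)
    (K : ℝ) (hK : 1 < K) (hJfK : ∀ n x, 0 < Jf n x ∧ Jf n x ≤ K)
    (τ : ℕ → X → ℕ) (hτmeas : ∀ n, Measurable (τ n))
    -- (u₁): τ n → τ 0 in L¹(m)
    (hτint : ∀ n, Integrable (fun x => (τ n x : ℝ)) m)
    (hτL1 : Tendsto (fun n => ∫ x, |(τ n x : ℝ) - (τ 0 x : ℝ)| ∂m) atTop (𝓝 0))
    -- `JF n = |det DF_n|`, via the chain rule along the return time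
    (JF : ℕ → X → ℝ)
    (hJF : ∀ n x, JF n x = ∏ j ∈ Finset.range (τ n x), Jf n ((f n)^[j] x))
    -- (i₂) expansion gives `|det DF_n| ≥ 1`
    (hJF1 : ∀ n x, 1 ≤ JF n x) :
    Tendsto (fun n => ∫ x, |Real.log (JF n x) - Real.log (JF 0 x)| ∂m) atTop (𝓝 0) := by
  have hlogJF : ∀ n x, Real.log (JF n x) ≤ τ n x * Real.log K := fun n x => by
    simpa [hJF] using Real.log_prod_le_card_mul_log (s := Finset.range (τ n x))
      (fun j _ => (hJfK n _).1) (fun j _ => (hJfK n _).2)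
  have hbound : ∀ n x,
      |Real.log (JF n x) - Real.log (JF 0 x)| ≤ Real.log K * (τ n x + τ 0 x) := by
    intro n x
    have h0 := Real.log_nonneg (hJF1 0 x)
    have hn := Real.log_nonneg (hJF1 n x)
    rw [abs_sub_le_iff]
    constructor <;> linarith [hlogJF n x, hlogJF 0 x]
  have hsmall : ∀ N : ℕ, ∀ ε > 0, ∀ᶠ n in atTop, ∀ x, τ n x = τ 0 x → τ 0 x ≤ N →
      |Real.log (JF n x) - Real.log (JF 0 x)| ≤ ε := by
    intro N ε hε
    have hprod := fun t => Metric.tendstoUniformly_iff.1 (tendstoUniformly_prod_comp_iterate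
      hfcont (hfcont 0) hJfcont (hJfcont 0) hfconv hJfconv t) ε hε
    filter_upwards [(Finset.range (N + 1)).eventually_all.2 fun t _ => hprod t]
      with n hn x hτx hN
    calc |Real.log (JF n x) - Real.log (JF 0 x)| ≤ |JF n x - JF 0 x| :=
          Real.abs_log_sub_log_le_abs_sub (hJF1 n x) (hJF1 0 x)
      _ ≤ ε := by
          rw [hJF, hJF, hτx, abs_sub_comm, ← Real.dist_eq]
          exact (hn _ (Finset.mem_range.2 (Nat.lt_succ_of_le hN)) x).le
  exact tendsto_integral_abs_of_le_mul_returnTime (hτmeas 0) hτint (hτint 0) hτL1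
    (Real.log_pos hK).le hbound hsmall

/-- In the setting of a family satisfying (u₁) and (u₂), if `f n → f 0` in
the `C^k` topology then `∫ |log |det DF_n| − log |det DF_0|| dm → 0`; i.e., the Jacobian
logarithms of the induced maps vary continuously in `L¹(m)`.  Here `JF n` denotes
`|det DF_n|`, given by the chain rule as a product of `Jf n = |det Df_n|` along the
return time `τ n`. -/
theorem stmt_16 {X : Type*} [MeasurableSpace X] [MetricSpace X] [CompactSpace X]
    [BorelSpace X]
    (m : Measure X) [IsProbabilityMeasure m]
    (f : ℕ → X → X) (hfcont : ∀ n, Continuous (f n))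
    (Jf : ℕ → X → ℝ) (hJfcont : ∀ n, Continuous (Jf n))
    -- `C^k` convergence `f n → f 0`: the maps and their Jacobians converge uniformly
    (hfconv : TendstoUniformly (fun n => f n) (f 0) atTop)
    (hJfconv : TendstoUniformly (fun n => Jf n) (Jf 0) atTop)
    -- uniform bound on the Jacobians over the family (compactness of `M`)
    (K : ℝ) (hK : 1 < K) (hJfK : ∀ n x, 0 < Jf n x ∧ Jf n x ≤ K)
    (τ : ℕ → X → ℕ) (hτmeas : ∀ n, Measurable (τ n)) (hτpos : ∀ n x, 1 ≤ τ n x)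
    -- (u₁): τ n → τ 0 in L¹(m)
    (hτint : ∀ n, Integrable (fun x => (τ n x : ℝ)) m)
    (hτL1 : Tendsto (fun n => ∫ x, |(τ n x : ℝ) - (τ 0 x : ℝ)| ∂m) atTop (𝓝 0))
    -- `JF n = |det DF_n|`, via the chain rule along the return time
    (JF : ℕ → X → ℝ)
    (hJF : ∀ n x, JF n x = ∏ j ∈ Finset.range (τ n x), Jf n ((f n)^[j] x))
    -- (i₂) expansion gives `|det DF_n| ≥ 1`
    (hJF1 : ∀ n x, 1 ≤ JF n x) :
    Tendsto (fun n => ∫ x, |Real.log (JF n x) - Real.log (JF 0 x)| ∂m) atTop (𝓝 0) :=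
  stmt_16_general m f hfcont Jf hJfcont hfconv hJfconv K hK hJfK τ hτmeas hτint hτL1 JF hJF hJF1
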